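/- arXiv:1409.1370 — 6 statements merged into one kernel-verified Lean document; each statement's English description precedes it below -/
import Mathlib

section
/- Let X be a topological space. The space SC(X) together with the family of maps {ψ_f} indexed by continuous maps f : X → B into finite discrete spaces B is a limit cone for the diagram sending each pair (B, f) to B; that is: (1) for every continuous f : X → B and every map of finite sets φ : B → B' one has φ ∘ ψ_f = ψ_{φ∘f}, and (2) for every topological space M equipped with continuous maps ψ'_f : M → B (one for each continuous f : X → B into a finite discrete space B) satisfying φ ∘ ψ'_f = ψ'_{φ∘f} for all maps φ : B → B' of finite sets, there exists a unique continuous map α : M → SC(X) such that ψ_f ∘ α = ψ'_f for every f. Consequently, the underlying functor of the codensity monad of the inclusion FinSet ↪ Top sends X to SC(X). -/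
open TopologicalSpace

/-- An ultrafilter in a Boolean algebra. -/
def IsBooleanUltrafilter {B : Type*} [BooleanAlgebra B] (U : Set B) : Prop :=
  ⊤ ∈ U ∧ ⊥ ∉ U ∧ (∀ x ∈ U, ∀ y ∈ U, x ⊓ y ∈ U) ∧
    (∀ x ∈ U, ∀ y, x ≤ y → y ∈ U) ∧ ∀ x : B, x ∈ U ∨ xᶜ ∈ U

/-- `SC X` is the set of ultrafilters of the Boolean algebra `Clopens X` of clopen
subsets of `X`. -/
def SC (X : Type*) [TopologicalSpace X] : Type _ :=
  {U : Set (Clopens X) // IsBooleanUltrafilter U}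

/-- The topology on `SC X` generated by the basic sets `D_A = {U | A ∈ U}`. -/
instance (X : Type*) [TopologicalSpace X] : TopologicalSpace (SC X) :=
  generateFrom {S | ∃ A : Clopens X, S = {U : SC X | A ∈ U.1}}

/-- If `SC X` is inhabited then `X` is nonempty. -/
theorem SC.nonempty_base {X : Type*} [TopologicalSpace X] (U : SC X) : Nonempty X := by
  obtain ⟨htop, hbot, -⟩ := U.2
  by_contra h
  rw [not_nonempty_iff] at h
  refine hbot ?_
  have : (⊥ : Clopens X) = ⊤ := by
    ext x
    exact (h.false x).elim
  rw [this]
  exact htop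

/-- For a continuous `f : X → B` into a finite discrete space, the preimage of a point
is a clopen subset of `X`, regarded as an element of `Clopens X`. -/
def clopenFiber {X B : Type*} [TopologicalSpace X] [TopologicalSpace B] [DiscreteTopology B]
    {f : X → B} (hf : Continuous f) (b : B) : Clopens X :=
  ⟨f ⁻¹' {b}, (isClopen_discrete _).preimage hf⟩

/-- `ψ_f : SC X → B` sends an ultrafilter `U` to the unique `b ∈ B` with `f ⁻¹' {b} ∈ U`. -/
noncomputable def psiSC {X B : Type*} [TopologicalSpace X] [TopologicalSpace B]
    [DiscreteTopology B] [Finite B] {f : X → B} (hf : Continuous f) (U : SC X) : B :=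
  letI := Classical.dec (∃ b : B, clopenFiber hf b ∈ U.1)
  if h : ∃ b : B, clopenFiber hf b ∈ U.1 then h.choose
  else f (Classical.choice (SC.nonempty_base U))


open TopologicalSpace

section Aux

variable {X : Type*} [TopologicalSpace X]

theorem ultra_sup_mem {U : Set (Clopens X)} (hU : IsBooleanUltrafilter U)
    {a b : Clopens X} (h : a ⊔ b ∈ U) : a ∈ U ∨ b ∈ U := by
  by_contra hc
  push_neg at hc
  have ha := (hU.2.2.2.2 a).resolve_left hc.1
  have hb := (hU.2.2.2.2 b).resolve_left hc.2
  have h1 : aᶜ ⊓ bᶜ ∈ U := hU.2.2.1 _ ha _ hb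
  have h2 : (a ⊔ b) ⊓ (aᶜ ⊓ bᶜ) ∈ U := hU.2.2.1 _ h _ h1
  have : (a ⊔ b) ⊓ (aᶜ ⊓ bᶜ) = ⊥ := by
    rw [← compl_sup, inf_compl_eq_bot]
  exact hU.2.1 (this ▸ h2)

theorem ultra_finset_sup_mem {U : Set (Clopens X)} (hU : IsBooleanUltrafilter U)
    {B : Type*} (g : B → Clopens X) (s : Finset B) (h : s.sup g ∈ U) :
    ∃ b ∈ s, g b ∈ U := by
  classical
  induction s using Finset.induction_on with
  | empty => simp only [Finset.sup_empty] at h; exact absurd h hU.2.1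
  | @insert a s ha ih =>
    rw [Finset.sup_insert] at h
    rcases ultra_sup_mem hU h with h1 | h1
    · exact ⟨a, Finset.mem_insert_self _ _, h1⟩
    · obtain ⟨b, hb, hb'⟩ := ih h1
      exact ⟨b, Finset.mem_insert_of_mem hb, hb'⟩

theorem exists_fiber_mem {B : Type*} [TopologicalSpace B] [DiscreteTopology B] [Finite B]
    {f : X → B} (hf : Continuous f) (U : SC X) : ∃ b : B, clopenFiber hf b ∈ U.1 := by
  classical
  cases nonempty_fintype B
  have hsup : (Finset.univ.sup fun b => clopenFiber hf b) = ⊤ := by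
    refine le_antisymm le_top fun x _ => ?_
    have : x ∈ clopenFiber hf (f x) := rfl
    exact SetLike.le_def.mp (Finset.le_sup (Finset.mem_univ (f x))) this
  have := ultra_finset_sup_mem U.2 (fun b => clopenFiber hf b) Finset.univ (hsup ▸ U.2.1)
  obtain ⟨b, -, hb⟩ := this
  exact ⟨b, hb⟩

theorem fiber_mem_unique {B : Type*} [TopologicalSpace B] [DiscreteTopology B]
    {f : X → B} (hf : Continuous f) (U : SC X) {b b' : B}
    (h : clopenFiber hf b ∈ U.1) (h' : clopenFiber hf b' ∈ U.1) : b = b' := by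
  by_contra hne
  have hmem : clopenFiber hf b ⊓ clopenFiber hf b' ∈ U.1 := U.2.2.2.1 _ h _ h'
  have : clopenFiber hf b ⊓ clopenFiber hf b' = ⊥ := by
    apply Clopens.ext
    ext x
    simp only [Clopens.coe_inf, Set.mem_inter_iff, Clopens.coe_bot, Set.mem_empty_iff_false,
      iff_false]
    rintro ⟨h1, h2⟩
    exact hne ((show f x = b from h1) ▸ (show f x = b' from h2))
  exact U.2.2.1 (this ▸ hmem)

theorem psiSC_fiber_mem {B : Type*} [TopologicalSpace B] [DiscreteTopology B] [Finite B]
    {f : X → B} (hf : Continuous f) (U : SC X) : clopenFiber hf (psiSC hf U) ∈ U.1 := by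
  have h := exists_fiber_mem hf U
  rw [psiSC, dif_pos h]
  exact h.choose_spec

theorem psiSC_eq_iff {B : Type*} [TopologicalSpace B] [DiscreteTopology B] [Finite B]
    {f : X → B} (hf : Continuous f) (U : SC X) (b : B) :
    psiSC hf U = b ↔ clopenFiber hf b ∈ U.1 := by
  constructor
  · rintro rfl; exact psiSC_fiber_mem hf U
  · intro h; exact fiber_mem_unique hf U (psiSC_fiber_mem hf U) h

/-- The Boolean indicator of a clopen set. -/
noncomputable def chi (A : Clopens X) : X → Bool := (A : Set X).boolIndicator

theorem chi_eq_true_iff (A : Clopens X) (x : X) : chi A x = true ↔ x ∈ A :=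
  ((A : Set X).mem_iff_boolIndicator x).symm

theorem chi_eq_false_iff (A : Clopens X) (x : X) : chi A x = false ↔ x ∉ A :=
  ((A : Set X).notMem_iff_boolIndicator x).symm

theorem chi_continuous (A : Clopens X) : Continuous (chi A) :=
  (continuous_boolIndicator_iff_isClopen _).mpr A.isClopen

theorem clopenFiber_chi_true (A : Clopens X) : clopenFiber (chi_continuous A) true = A := by
  apply Clopens.ext
  ext x
  exact chi_eq_true_iff A x

end Aux
section Chi

variable {X : Type*} [TopologicalSpace X]

theorem mem_clopens_inf {A C : Clopens X} {x : X} : x ∈ A ⊓ C ↔ x ∈ A ∧ x ∈ C := Iff.rfl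

theorem mem_clopens_compl {A : Clopens X} {x : X} : x ∈ Aᶜ ↔ ¬ x ∈ A := Iff.rfl

theorem mem_clopens_top {x : X} : x ∈ (⊤ : Clopens X) := trivial

theorem mem_clopens_bot {x : X} : x ∈ (⊥ : Clopens X) ↔ False := Iff.rfl

theorem chi_top : chi (⊤ : Clopens X) = fun _ => true := by
  funext x; exact (chi_eq_true_iff _ x).mpr mem_clopens_top

theorem chi_bot : chi (⊥ : Clopens X) = fun _ => false := by
  funext x; exact (chi_eq_false_iff _ x).mpr (mem_clopens_bot.mp)

theorem chi_inf (A C : Clopens X) : chi (A ⊓ C) = fun x => chi A x && chi C x := by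
  funext x
  by_cases h : x ∈ A ⊓ C
  · rw [(chi_eq_true_iff _ x).mpr h, (chi_eq_true_iff A x).mpr (mem_clopens_inf.mp h).1,
      (chi_eq_true_iff C x).mpr (mem_clopens_inf.mp h).2]
    rfl
  · rw [(chi_eq_false_iff _ x).mpr h]
    rcases not_and_or.mp (fun hc => h (mem_clopens_inf.mpr hc)) with h' | h'
    · rw [(chi_eq_false_iff A x).mpr h', Bool.false_and]
    · rw [(chi_eq_false_iff C x).mpr h', Bool.and_false]

theorem chi_of_le {A C : Clopens X} (h : A ≤ C) :
    chi C = fun x => chi A x || chi C x := by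
  funext x
  by_cases hx : x ∈ A
  · rw [(chi_eq_true_iff A x).mpr hx, (chi_eq_true_iff C x).mpr (SetLike.le_def.mp h hx),
      Bool.true_or]
  · rw [(chi_eq_false_iff A x).mpr hx, Bool.false_or]

theorem chi_compl (A : Clopens X) : chi Aᶜ = fun x => !(chi A x) := by
  funext x
  by_cases hx : x ∈ A
  · rw [(chi_eq_true_iff A x).mpr hx,
      (chi_eq_false_iff Aᶜ x).mpr (fun hc => mem_clopens_compl.mp hc hx)]
    rfl
  · rw [(chi_eq_false_iff A x).mpr hx, (chi_eq_true_iff Aᶜ x).mpr (mem_clopens_compl.mpr hx)]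
    rfl

theorem chi_fiber {B : Type*} [TopologicalSpace B] [DiscreteTopology B] {f : X → B}
    (hf : Continuous f) (b : B) :
    chi (clopenFiber hf b) = Set.boolIndicator {b} ∘ f := rfl

end Chi
/-- `SC X`, with the projections `ψ_f` indexed by continuous maps
`f : X → B` into finite discrete spaces, is a limit cone for the diagram sending `(B, f)`
to `B`: (1) the cone condition `φ ∘ ψ_f = ψ_{φ∘f}` holds, and (2) any topological space `M`
with a compatible family of continuous maps `ψ'_f : M → B` factors uniquely through `SC X`
via a continuous map `α` with `ψ_f ∘ α = ψ'_f` for all `f`.  (In other words, the underlying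
functor of the codensity monad of `FinSet ↪ Top` sends `X` to `SC X`.) -/
theorem SC_isLimitCone {X : Type*} [TopologicalSpace X] :
    (∀ (B B' : Type) [TopologicalSpace B] [DiscreteTopology B] [Finite B]
        [TopologicalSpace B'] [DiscreteTopology B'] [Finite B']
        (f : X → B) (hf : Continuous f) (φ : B → B'),
        φ ∘ psiSC hf = psiSC (continuous_of_discreteTopology.comp hf : Continuous (φ ∘ f))) ∧
    (∀ (M : Type*) [TopologicalSpace M]
        (ψ' : ∀ (B : Type) [TopologicalSpace B] [DiscreteTopology B] [Finite B]
            (f : X → B), Continuous f → M → B),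
        (∀ (B : Type) [TopologicalSpace B] [DiscreteTopology B] [Finite B]
            (f : X → B) (hf : Continuous f), Continuous (ψ' B f hf)) →
        (∀ (B B' : Type) [TopologicalSpace B] [DiscreteTopology B] [Finite B]
            [TopologicalSpace B'] [DiscreteTopology B'] [Finite B']
            (f : X → B) (hf : Continuous f) (φ : B → B'),
            φ ∘ ψ' B f hf = ψ' B' (φ ∘ f) (continuous_of_discreteTopology.comp hf)) →
        ∃! α : M → SC X, Continuous α ∧
          ∀ (B : Type) [TopologicalSpace B] [DiscreteTopology B] [Finite B]
            (f : X → B) (hf : Continuous f), psiSC hf ∘ α = ψ' B f hf) := by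
  constructor
  · intro B B' _ _ _ _ _ _ f hf φ
    funext U
    show φ (psiSC hf U) = psiSC _ U
    rw [eq_comm, psiSC_eq_iff]
    refine U.2.2.2.2.1 _ (psiSC_fiber_mem hf U) _ ?_
    intro x hx
    show φ (f x) = φ (psiSC hf U)
    exact congrArg φ hx
  · intro M _ ψ' hcont hnat
    have psi_congr : ∀ (B : Type) [TopologicalSpace B] [DiscreteTopology B] [Finite B]
        (f g : X → B) (hf : Continuous f) (hg : Continuous g), f = g →
        ψ' B f hf = ψ' B g hg := by
      rintro B _ _ _ f g hf hg rfl; rfl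
    -- structure of the ultrafilter attached to `m : M`
    have hUm : ∀ m : M,
        IsBooleanUltrafilter {A : Clopens X | ψ' Bool (chi A) (chi_continuous A) m = true} := by
      intro m
      refine ⟨?_, ?_, ?_, ?_, ?_⟩
      · show ψ' Bool (chi ⊤) _ m = true
        have h := congrFun (hnat Bool Bool (chi ⊤) (chi_continuous ⊤) (fun _ => true)) m
        rw [psi_congr Bool (chi ⊤) ((fun _ => true) ∘ chi ⊤) (chi_continuous ⊤)
          (continuous_of_discreteTopology.comp (chi_continuous ⊤))
          (by rw [chi_top]; rfl), ← h]
        rfl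
      · show ¬ (ψ' Bool (chi ⊥) _ m = true)
        have h := congrFun (hnat Bool Bool (chi ⊥) (chi_continuous ⊥) (fun _ => false)) m
        rw [psi_congr Bool (chi ⊥) ((fun _ => false) ∘ chi ⊥) (chi_continuous ⊥)
          (continuous_of_discreteTopology.comp (chi_continuous ⊥))
          (by rw [chi_bot]; rfl), ← h]
        exact Bool.false_ne_true
      · intro A hA C hC
        have hf2 : Continuous (fun x => (chi A x, chi C x) : X → Bool × Bool) :=
          (chi_continuous A).prodMk (chi_continuous C)
        show ψ' Bool (chi (A ⊓ C)) _ m = true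
        have h := congrFun (hnat (Bool × Bool) Bool _ hf2 (fun p => p.1 && p.2)) m
        have h1 := congrFun (hnat (Bool × Bool) Bool _ hf2 Prod.fst) m
        have h2 := congrFun (hnat (Bool × Bool) Bool _ hf2 Prod.snd) m
        have hA' : ψ' Bool (chi A) (chi_continuous A) m = true := hA
        have hC' : ψ' Bool (chi C) (chi_continuous C) m = true := hC
        have e1 : (ψ' (Bool × Bool) _ hf2 m).1 = true := by
          rw [psi_congr Bool (chi A) (Prod.fst ∘ (fun x => (chi A x, chi C x)))
            (chi_continuous A) (continuous_of_discreteTopology.comp hf2) rfl, ← h1] at hA'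
          exact hA'
        have e2 : (ψ' (Bool × Bool) _ hf2 m).2 = true := by
          rw [psi_congr Bool (chi C) (Prod.snd ∘ (fun x => (chi A x, chi C x)))
            (chi_continuous C) (continuous_of_discreteTopology.comp hf2) rfl, ← h2] at hC'
          exact hC'
        rw [psi_congr Bool (chi (A ⊓ C)) ((fun p : Bool × Bool => p.1 && p.2) ∘
            (fun x => (chi A x, chi C x))) (chi_continuous _)
            (continuous_of_discreteTopology.comp hf2) (by rw [chi_inf]; rfl), ← h]
        show ((ψ' (Bool × Bool) _ hf2 m).1 && (ψ' (Bool × Bool) _ hf2 m).2) = true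
        rw [e1, e2]
        rfl
      · intro A hA C hAC
        have hf2 : Continuous (fun x => (chi A x, chi C x) : X → Bool × Bool) :=
          (chi_continuous A).prodMk (chi_continuous C)
        show ψ' Bool (chi C) _ m = true
        have h := congrFun (hnat (Bool × Bool) Bool _ hf2 (fun p => p.1 || p.2)) m
        have h1 := congrFun (hnat (Bool × Bool) Bool _ hf2 Prod.fst) m
        have hA' : ψ' Bool (chi A) (chi_continuous A) m = true := hA
        have e1 : (ψ' (Bool × Bool) _ hf2 m).1 = true := by
          rw [psi_congr Bool (chi A) (Prod.fst ∘ (fun x => (chi A x, chi C x)))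
            (chi_continuous A) (continuous_of_discreteTopology.comp hf2) rfl, ← h1] at hA'
          exact hA'
        rw [psi_congr Bool (chi C) ((fun p : Bool × Bool => p.1 || p.2) ∘
            (fun x => (chi A x, chi C x))) (chi_continuous _)
            (continuous_of_discreteTopology.comp hf2)
            (funext fun x => congrFun (chi_of_le hAC) x), ← h]
        show ((ψ' (Bool × Bool) _ hf2 m).1 || (ψ' (Bool × Bool) _ hf2 m).2) = true
        rw [e1, Bool.true_or]
      · intro A
        have h := congrFun (hnat Bool Bool (chi A) (chi_continuous A) (fun b => !b)) m
        have hc : ψ' Bool (chi Aᶜ) (chi_continuous Aᶜ) m = !(ψ' Bool (chi A) (chi_continuous A) m) := by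
          rw [psi_congr Bool (chi Aᶜ) ((fun b => !b) ∘ chi A) (chi_continuous Aᶜ)
            (continuous_of_discreteTopology.comp (chi_continuous A)) (by rw [chi_compl]; rfl),
            ← h]
          rfl
        cases hb : ψ' Bool (chi A) (chi_continuous A) m
        · refine Or.inr (show ψ' Bool (chi Aᶜ) (chi_continuous Aᶜ) m = true from ?_)
          rw [hc, hb]
          rfl
        · exact Or.inl hb
    set α : M → SC X := fun m =>
      ⟨{A : Clopens X | ψ' Bool (chi A) (chi_continuous A) m = true}, hUm m⟩ with hα
    -- key compatibility: membership of a fiber in `α m`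
    have hfiber : ∀ (m : M) (B : Type) [TopologicalSpace B] [DiscreteTopology B] [Finite B]
        (f : X → B) (hf : Continuous f) (b : B),
        clopenFiber hf b ∈ (α m).1 ↔ ψ' B f hf m = b := by
      intro m B _ _ _ f hf b
      have h := congrFun (hnat B Bool f hf (Set.boolIndicator {b})) m
      show ψ' Bool (chi (clopenFiber hf b)) _ m = true ↔ _
      rw [psi_congr Bool (chi (clopenFiber hf b)) (Set.boolIndicator {b} ∘ f)
        (chi_continuous _) (continuous_of_discreteTopology.comp hf) (chi_fiber hf b), ← h]
      exact ⟨fun hh => (Set.mem_iff_boolIndicator {b} _).mpr hh,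
        fun hh => (Set.mem_iff_boolIndicator {b} _).mp hh⟩
    have hcomm : ∀ (B : Type) [TopologicalSpace B] [DiscreteTopology B] [Finite B]
        (f : X → B) (hf : Continuous f), psiSC hf ∘ α = ψ' B f hf := by
      intro B _ _ _ f hf
      funext m
      show psiSC hf (α m) = ψ' B f hf m
      rw [psiSC_eq_iff]
      exact (hfiber m B f hf _).mpr rfl
    refine ⟨α, ⟨?_, hcomm⟩, ?_⟩
    · -- continuity of α
      apply continuous_generateFrom_iff.mpr
      rintro S ⟨A, rfl⟩
      have : α ⁻¹' {U : SC X | A ∈ U.1} = ψ' Bool (chi A) (chi_continuous A) ⁻¹' {true} := rfl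
      rw [this]
      exact (hcont Bool (chi A) (chi_continuous A)).isOpen_preimage _ (isOpen_discrete _)
    · -- uniqueness
      rintro β ⟨-, hβ⟩
      funext m
      apply Subtype.ext
      ext A
      have hA : ∀ U : SC X, A ∈ U.1 ↔ psiSC (chi_continuous A) U = true := by
        intro U
        rw [psiSC_eq_iff, clopenFiber_chi_true]
      show A ∈ (β m).1 ↔ A ∈ (α m).1
      rw [hA (β m), hA (α m), show psiSC (chi_continuous A) (β m) =
          (psiSC (chi_continuous A) ∘ β) m from rfl,
        show psiSC (chi_continuous A) (α m) = (psiSC (chi_continuous A) ∘ α) m from rfl,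
        hβ Bool (chi A) (chi_continuous A), hcomm Bool (chi A) (chi_continuous A)]
end

section
/- Let X be a topological space. The space Fp(O(X)) together with the family of maps {ψ_f} indexed by continuous maps f : X → P(I) (I ranging over sets) is a limit cone for the diagram sending each pair (P(I), f) to P(I); that is: (1) for every continuous f : X → P(I) and every continuous φ : P(I) → P(J) one has φ ∘ ψ_f = ψ_{φ∘f}, and (2) for every topological space M equipped with continuous maps ψ'_f : M → P(I) (one for each set I and continuous f : X → P(I)) satisfying φ ∘ ψ'_f = ψ'_{φ∘f} for all continuous φ : P(I) → P(J), there exists a unique continuous map α : M → Fp(O(X)) such that ψ_f ∘ α = ψ'_f for every f. Consequently, the underlying functor of the codensity monad of the inclusion of the category of powers of the Sierpiński space into Top sends X to its soberification Fp(O(X)). -/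
open TopologicalSpace Topology

/-- The topology on the powerset `Set I` generated by the basic sets
`U_F = {A | F ⊆ A}` for finite `F ⊆ I`.  This is the `I`-th power of the
Sierpiński space. -/
def pTop (I : Type*) : TopologicalSpace (Set I) :=
  generateFrom {S : Set (Set I) | ∃ F : Finset I, S = {A : Set I | ↑F ⊆ A}}

/-- The basic open set `U_F = {A | F ⊆ A}` is open in `pTop I`. -/
theorem isOpen_UF {I : Type*} (F : Finset I) :
    IsOpen[pTop I] {A : Set I | ↑F ⊆ A} :=
  TopologicalSpace.isOpen_generateFrom_of_mem ⟨F, rfl⟩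

/-- The subbasic open set `U_{i} = {A | i ∈ A}` is open in `pTop I`. -/
theorem isOpen_Ui {I : Type*} (i : I) :
    IsOpen[pTop I] {A : Set I | i ∈ A} := by
  have h : {A : Set I | i ∈ A} = {A : Set I | ↑({i} : Finset I) ⊆ A} := by
    ext A; simp
  rw [h]
  exact isOpen_UF {i}

/-- A completely prime filter of the frame `Opens X` of open sets of `X`. -/
def IsCompletelyPrimeFilter {X : Type*} [TopologicalSpace X] (p : Set (Opens X)) : Prop :=
  ⊤ ∈ p ∧ ⊥ ∉ p ∧ (∀ A ∈ p, ∀ B ∈ p, A ⊓ B ∈ p) ∧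
    (∀ A ∈ p, ∀ B, A ≤ B → B ∈ p) ∧
    ∀ S : Set (Opens X), sSup S ∈ p → ∃ A ∈ S, A ∈ p

/-- `Fp X` is the set of points (completely prime filters) of the frame of opens of `X`. -/
def Fp (X : Type*) [TopologicalSpace X] : Type _ :=
  {p : Set (Opens X) // IsCompletelyPrimeFilter p}

/-- The topology on `Fp X` whose open sets are generated by the sets
`A* = {𝔭 | A ∈ 𝔭}` for `A` open in `X`. -/
instance (X : Type*) [TopologicalSpace X] : TopologicalSpace (Fp X) :=
  generateFrom {S | ∃ A : Opens X, S = {p : Fp X | A ∈ p.1}}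

/-- `ψ_f : Fp(O(X)) → P(I)`, defined by `i ∈ ψ_f(𝔭) ↔ f⁻¹(U_{i}) ∈ 𝔭`. -/
def psiFp {X : Type*} [TopologicalSpace X] {I : Type*} {f : X → Set I}
    (hf : Continuous[‹TopologicalSpace X›, pTop I] f) (p : Fp X) : Set I :=
  {i : I | (⟨f ⁻¹' {A : Set I | i ∈ A}, @IsOpen.preimage X (Set I) _ (pTop I) f hf _ (isOpen_Ui i)⟩ : Opens X) ∈ p.1}

/-!
The key fact is that `f⁻¹(W) ∈ 𝔭 ↔ ψ_f(𝔭) ∈ W` for every open `W ⊆ P(I)`: both sides respect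
finite intersections and arbitrary unions of opens and agree on the subbasic sets `U_{i}`.
Taking `W = φ⁻¹(U_{j})` gives the cone condition.

For the universal property everything is decided by the component at the unit
`η : X → P(O(X))`, `x ↦ {A | x ∈ A}`. Naturality along the maps `P(O(X)) → P(1)` classifying
open sets `W` shows that `ψ'_η(m)` cannot be separated from the points `η(x)` by open conditions,
which forces it to be a completely prime filter `α(m)`. Every `f` factors as `φ_f ∘ η` with `φ_f`
continuous, whence `ψ_f ∘ α = ψ'_f`; and `ψ_η` is the inclusion `Fp(O(X)) → P(O(X))`, whence
uniqueness.
-/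

open Set

attribute [local instance] pTop

theorem pTop_eq_generateFrom (I : Type*) :
    pTop I = generateFrom (range fun i : I => {A : Set I | i ∈ A}) := by
  refine le_antisymm (le_generateFrom ?_) (le_generateFrom ?_)
  · rintro _ ⟨i, rfl⟩
    exact isOpen_Ui i
  · rintro _ ⟨F, rfl⟩
    have hF : {A : Set I | ↑F ⊆ A} = ⋂ i ∈ F, {A : Set I | i ∈ A} := by
      ext A
      simp [subset_def]
    rw [hF]
    exact @isOpen_biInter_finset _ _ (generateFrom _) _ _ fun i _ =>
      isOpen_generateFrom_of_mem ⟨i, rfl⟩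

theorem continuous_pTop_iff {Y I : Type*} [TopologicalSpace Y] {f : Y → Set I} :
    Continuous f ↔ ∀ i, IsOpen {y | i ∈ f y} := by
  have h := @continuous_generateFrom_iff Y (Set I) f ‹_› (range fun i : I => {A : Set I | i ∈ A})
  rwa [← pTop_eq_generateFrom I, forall_mem_range] at h

namespace Fp

variable {X : Type*} [TopologicalSpace X] (p : Fp X)

def sets : Set (Set X) := SetLike.coe '' p.1

theorem coe_mem_sets {A : Opens X} : (A : Set X) ∈ p.sets ↔ A ∈ p.1 :=
  SetLike.coe_injective.mem_set_image

theorem univ_mem_sets : univ ∈ p.sets :=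
  ⟨⊤, p.2.1, Opens.coe_top⟩

theorem inf_mem_iff {A B : Opens X} : A ⊓ B ∈ p.1 ↔ A ∈ p.1 ∧ B ∈ p.1 :=
  ⟨fun h => ⟨p.2.2.2.2.1 _ h _ inf_le_left, p.2.2.2.2.1 _ h _ inf_le_right⟩,
    fun h => p.2.2.2.1 _ h.1 _ h.2⟩

theorem sSup_mem_iff {S : Set (Opens X)} : sSup S ∈ p.1 ↔ ∃ A ∈ S, A ∈ p.1 :=
  ⟨p.2.2.2.2.2 S, fun ⟨_, hA, hAp⟩ => p.2.2.2.2.1 _ hAp _ (le_sSup hA)⟩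

theorem inter_mem_sets_iff {U V : Set X} (hU : IsOpen U) (hV : IsOpen V) :
    U ∩ V ∈ p.sets ↔ U ∈ p.sets ∧ V ∈ p.sets := by
  lift U to Opens X using hU
  lift V to Opens X using hV
  rw [← Opens.coe_inf, coe_mem_sets, coe_mem_sets, coe_mem_sets, inf_mem_iff]

theorem sUnion_mem_sets_iff {S : Set (Set X)} (hS : ∀ U ∈ S, IsOpen U) :
    ⋃₀ S ∈ p.sets ↔ ∃ U ∈ S, U ∈ p.sets := by
  lift S to Set (Opens X) using hS
  rw [sUnion_image, ← Opens.coe_sSup, coe_mem_sets, sSup_mem_iff, exists_mem_image]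
  simp only [coe_mem_sets]

theorem preimage_mem_sets_iff {I : Type*} {f : X → Set I} (hf : Continuous f)
    {W : Set (Set I)} (hW : IsOpen W) : f ⁻¹' W ∈ p.sets ↔ psiFp hf p ∈ W := by
  have hopen : ∀ W, GenerateOpen (range fun i : I => {A : Set I | i ∈ A}) W →
      IsOpen (f ⁻¹' W) := fun W hW => hf.isOpen_preimage W (by rwa [pTop_eq_generateFrom I])
  rw [pTop_eq_generateFrom I] at hW
  induction hW with
  | basic _ hW =>
    obtain ⟨i, rfl⟩ := hW
    exact p.coe_mem_sets (A := ⟨_, (isOpen_Ui i).preimage hf⟩)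
  | univ => simpa only [preimage_univ, mem_univ, iff_true] using p.univ_mem_sets
  | inter U V hU hV ihU ihV =>
    rw [preimage_inter]
    exact (p.inter_mem_sets_iff (hopen U hU) (hopen V hV)).trans (and_congr ihU ihV)
  | sUnion S hS ih =>
    rw [preimage_sUnion, ← sUnion_image,
      p.sUnion_mem_sets_iff (forall_mem_image.2 fun W hW => hopen W (hS W hW)), exists_mem_image]
    exact exists_congr fun W => and_congr_right (ih W)

end Fp

theorem comp_psiFp {X : Type*} [TopologicalSpace X] {I J : Type*} {f : X → Set I}
    (hf : Continuous f) {φ : Set I → Set J} (hφ : Continuous φ) :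
    φ ∘ psiFp hf = psiFp (hφ.comp hf) := by
  funext p
  ext j
  exact (p.preimage_mem_sets_iff hf ((isOpen_Ui j).preimage hφ)).symm.trans
    (p.coe_mem_sets (A := ⟨_, ((isOpen_Ui j).preimage hφ).preimage hf⟩))

section UniversalProperty

variable {X : Type*} [TopologicalSpace X]

/-- The unit `η : X → P(O(X))`. -/
def opensContaining (X : Type*) [TopologicalSpace X] (x : X) : Set (Opens X) := {A | x ∈ A}

theorem continuous_opensContaining : Continuous (opensContaining X) :=
  continuous_pTop_iff.2 fun A => A.2

theorem psiFp_opensContaining (p : Fp X) : psiFp continuous_opensContaining p = p.1 :=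
  rfl

/-- The map `φ_f : P(O(X)) → P(I)` through which `f` factors as `φ_f ∘ η`; `ψ_f` is its
restriction to `Fp X`. -/
def psiSet {I : Type*} {f : X → Set I} (hf : Continuous f) (S : Set (Opens X)) : Set I :=
  {i | ⟨f ⁻¹' {A | i ∈ A}, (isOpen_Ui i).preimage hf⟩ ∈ S}

theorem continuous_psiSet {I : Type*} {f : X → Set I} (hf : Continuous f) :
    Continuous (psiSet hf) :=
  continuous_pTop_iff.2 fun _ => isOpen_Ui _

theorem psiSet_comp_opensContaining {I : Type*} {f : X → Set I} (hf : Continuous f) :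
    psiSet hf ∘ opensContaining X = f :=
  rfl

def classifying {Y : Type*} (W : Set (Set Y)) (S : Set Y) : Set Unit := {_u | S ∈ W}

theorem continuous_classifying {Y : Type*} {W : Set (Set Y)} (hW : IsOpen W) :
    Continuous (classifying W) :=
  continuous_pTop_iff.2 fun _ => hW

theorem isCompletelyPrimeFilter_of_forall_mem_iff {P : Set (Opens X)}
    (hP : ∀ W₁ W₂ : Set (Set (Opens X)), IsOpen W₁ → IsOpen W₂ →
      opensContaining X ⁻¹' W₁ = opensContaining X ⁻¹' W₂ → (P ∈ W₁ ↔ P ∈ W₂)) :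
    IsCompletelyPrimeFilter P := by
  have hU (A : Opens X) : IsOpen {S : Set (Opens X) | A ∈ S} := isOpen_Ui A
  refine ⟨?top, ?bot, ?inf, ?up, ?prime⟩
  · exact (hP _ _ (hU ⊤) isOpen_univ (by ext; simp [opensContaining])).2 trivial
  · exact (hP _ _ (hU ⊥) isOpen_empty (by ext; simp [opensContaining])).1
  · intro A hA B hB
    exact (hP _ _ (hU _) ((hU A).inter (hU B)) (by ext; simp [opensContaining])).2 ⟨hA, hB⟩
  · intro A hA B hAB
    refine ((hP _ _ (hU A) ((hU A).inter (hU B)) ?_).1 hA).2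
    ext x
    simpa [opensContaining] using @hAB x
  · intro S hS
    simpa using (hP _ _ (hU _) (isOpen_biUnion fun A _ => hU A)
      (by ext; simp [opensContaining, Opens.mem_sSup])).1 hS

end UniversalProperty

def IsNaturalFamily {X : Type} [TopologicalSpace X] {M : Type*}
    (ψ' : ∀ (I : Type) (f : X → Set I), Continuous f → M → Set I) : Prop :=
  ∀ (I J : Type) (f : X → Set I) (hf : Continuous f) (φ : Set I → Set J) (hφ : Continuous φ),
    φ ∘ ψ' I f hf = ψ' J (φ ∘ f) (hφ.comp hf)

namespace IsNaturalFamily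

variable {X : Type} [TopologicalSpace X] {M : Type*}
  {ψ' : ∀ (I : Type) (f : X → Set I), Continuous f → M → Set I}

theorem comp_eq (hψ : IsNaturalFamily ψ') {I J : Type} {f : X → Set I} (hf : Continuous f)
    {φ : Set I → Set J} (hφ : Continuous φ) {g : X → Set J} (hg : Continuous g) (h : φ ∘ f = g) :
    φ ∘ ψ' I f hf = ψ' J g hg := by
  subst h
  exact hψ I J f hf φ hφ

theorem mem_iff_of_preimage_eq (hψ : IsNaturalFamily ψ') {I : Type} {f : X → Set I}
    (hf : Continuous f) {W₁ W₂ : Set (Set I)} (hW₁ : IsOpen W₁) (hW₂ : IsOpen W₂)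
    (h : f ⁻¹' W₁ = f ⁻¹' W₂) (m : M) : ψ' I f hf m ∈ W₁ ↔ ψ' I f hf m ∈ W₂ := by
  have hcomp : classifying W₁ ∘ f = classifying W₂ ∘ f := by
    funext x
    exact congrArg (fun U : Set X => {_u : Unit | x ∈ U}) h
  have hc₂ := continuous_classifying hW₂
  have heq := (hψ.comp_eq hf (continuous_classifying hW₁) (hc₂.comp hf) hcomp).trans
    (hψ _ _ f hf _ hc₂).symm
  exact Set.ext_iff.1 (congrFun heq m) ()

def lift (hψ : IsNaturalFamily ψ') (m : M) : Fp X :=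
  ⟨ψ' _ (opensContaining X) continuous_opensContaining m,
    isCompletelyPrimeFilter_of_forall_mem_iff fun _ _ hW₁ hW₂ h =>
      hψ.mem_iff_of_preimage_eq _ hW₁ hW₂ h m⟩

theorem continuous_lift (hψ : IsNaturalFamily ψ') [TopologicalSpace M]
    (hcont : Continuous (ψ' _ (opensContaining X) continuous_opensContaining)) :
    Continuous hψ.lift :=
  continuous_generateFrom_iff.2 fun _ ⟨A, hA⟩ => hA ▸ (isOpen_Ui A).preimage hcont

theorem psiFp_comp_lift (hψ : IsNaturalFamily ψ') {I : Type} {f : X → Set I}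
    (hf : Continuous f) :
    psiFp hf ∘ hψ.lift = ψ' I f hf :=
  hψ.comp_eq continuous_opensContaining (continuous_psiSet hf) hf (psiSet_comp_opensContaining hf)

theorem eq_lift_of_psiFp_comp_eq (hψ : IsNaturalFamily ψ') {β : M → Fp X}
    (h : psiFp continuous_opensContaining ∘ β =
      ψ' _ (opensContaining X) continuous_opensContaining) :
    β = hψ.lift :=
  funext fun m => Subtype.ext ((psiFp_opensContaining (β m)).symm.trans (congrFun h m))

end IsNaturalFamily

/-- `Fp(O(X))`, with the projections `ψ_f` indexed by continuous maps
`f : X → P(I)` into powers of the Sierpiński space, is a limit cone for the diagram sending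
`(P(I), f)` to `P(I)`: (1) the cone condition `φ ∘ ψ_f = ψ_{φ∘f}` holds, and (2) any
topological space `M` with a compatible family of continuous maps `ψ'_f : M → P(I)` factors
uniquely through `Fp(O(X))` via a continuous `α` with `ψ_f ∘ α = ψ'_f` for all `f`.
(In other words, the underlying functor of the codensity monad of the inclusion of the
powers of the Sierpiński space into `Top` sends `X` to its soberification `Fp(O(X))`.) -/
theorem Fp_isLimitCone {X : Type} [tX : TopologicalSpace X] :
    (∀ (I J : Type) (f : X → Set I) (hf : Continuous[tX, pTop I] f)
        (φ : Set I → Set J) (hφ : Continuous[pTop I, pTop J] φ),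
        φ ∘ psiFp hf =
          psiFp (@Continuous.comp X (Set I) (Set J) tX (pTop I) (pTop J) f φ hφ hf :
            Continuous[tX, pTop J] (φ ∘ f))) ∧
    (∀ (M : Type*) [tM : TopologicalSpace M]
        (ψ' : ∀ (I : Type) (f : X → Set I), Continuous[tX, pTop I] f → M → Set I),
        (∀ (I : Type) (f : X → Set I) (hf : Continuous[tX, pTop I] f),
          Continuous[tM, pTop I] (ψ' I f hf)) →
        (∀ (I J : Type) (f : X → Set I) (hf : Continuous[tX, pTop I] f)
            (φ : Set I → Set J) (hφ : Continuous[pTop I, pTop J] φ),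
          φ ∘ ψ' I f hf =
            ψ' J (φ ∘ f) (@Continuous.comp X (Set I) (Set J) tX (pTop I) (pTop J) f φ hφ hf)) →
        ∃! α : M → Fp X, Continuous[tM, _] α ∧
          ∀ (I : Type) (f : X → Set I) (hf : Continuous[tX, pTop I] f),
            psiFp hf ∘ α = ψ' I f hf) := by
  refine ⟨fun _ _ _ hf _ hφ => comp_psiFp hf hφ, fun M _ ψ' hcont hnat => ?_⟩
  have hψ : IsNaturalFamily ψ' := hnat
  refine ⟨hψ.lift, ⟨hψ.continuous_lift (hcont _ _ _), fun _ _ => hψ.psiFp_comp_lift⟩, ?_⟩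
  rintro β ⟨-, hβ⟩
  exact hψ.eq_lift_of_psiFp_comp_eq (hβ _ _ _)
end

section
/- Let B be a Boolean algebra and U ⊆ B. Then U is an ultrafilter if and only if: for all x₀, x₁, x₂ ∈ B with x₀ ∨ x₁ ∨ x₂ = ⊤ and xᵢ ∧ xⱼ = ⊥ for all 0 ≤ i < j < 3, there is exactly one i ∈ {0,1,2} with xᵢ ∈ U. -/
/-- `U` is an ultrafilter iff for every partition of `⊤` into three pairwise
disjoint elements `x₀, x₁, x₂`, exactly one `xᵢ` belongs to `U`. -/
theorem isBooleanUltrafilter_iff_three_partition {B : Type*} [BooleanAlgebra B] (U : Set B) :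
    IsBooleanUltrafilter U ↔
      ∀ x : Fin 3 → B, x 0 ⊔ x 1 ⊔ x 2 = ⊤ →
        (∀ i j : Fin 3, i < j → x i ⊓ x j = ⊥) →
        ∃! i : Fin 3, x i ∈ U := by
  constructor
  · rintro ⟨htop, hbot, hmeet, hup, hcomp⟩ x hsup hdis
    have hpair : ∀ i j : Fin 3, i ≠ j → x i ∈ U → x j ∈ U → False := by
      intro i j hij hi hj
      rcases lt_or_gt_of_ne hij with h | h
      · exact hbot (hdis i j h ▸ hmeet _ hi _ hj)
      · exact hbot (hdis j i h ▸ hmeet _ hj _ hi)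
    have hex : x 0 ∈ U ∨ x 1 ∈ U ∨ x 2 ∈ U := by
      rcases hcomp (x 0) with h0 | h0
      · exact Or.inl h0
      · have hc0 : (x 0)ᶜ = x 1 ⊔ x 2 := by
          have hic : IsCompl (x 0) (x 1 ⊔ x 2) := by
            apply IsCompl.of_eq
            · rw [inf_sup_left, hdis 0 1 (by decide), hdis 0 2 (by decide), sup_idem]
            · rw [← sup_assoc]; exact hsup
          exact hic.compl_eq
        rw [hc0] at h0
        rcases hcomp (x 1) with h1 | h1
        · exact Or.inr (Or.inl h1)
        · have h2 : (x 1 ⊔ x 2) ⊓ (x 1)ᶜ ∈ U := hmeet _ h0 _ h1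
          have hle : x 2 ≤ (x 1)ᶜ := by
            have : Disjoint (x 1) (x 2) := disjoint_iff.mpr (hdis 1 2 (by decide))
            exact this.le_compl_left
          have heq : (x 1 ⊔ x 2) ⊓ (x 1)ᶜ = x 2 := by
            rw [inf_sup_right, inf_compl_eq_bot, bot_sup_eq, inf_eq_left.mpr hle]
          rw [heq] at h2
          exact Or.inr (Or.inr h2)
    rcases hex with h | h | h
    · exact ⟨0, h, fun j hj => by by_contra hne; exact hpair j 0 hne hj h⟩
    · exact ⟨1, h, fun j hj => by by_contra hne; exact hpair j 1 hne hj h⟩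
    · exact ⟨2, h, fun j hj => by by_contra hne; exact hpair j 2 hne hj h⟩
  · intro h
    have key : ∀ a b c : B, a ⊔ b ⊔ c = ⊤ → a ⊓ b = ⊥ → a ⊓ c = ⊥ → b ⊓ c = ⊥ →
        ∃! i : Fin 3, ![a, b, c] i ∈ U := by
      intro a b c h1 h2 h3 h4
      apply h ![a, b, c]
      · simpa using h1
      · intro i j hij
        fin_cases i <;> fin_cases j <;> simp_all
    have hbot : ⊥ ∉ U := by
      intro hb
      obtain ⟨i, hi, hu⟩ := key ⊤ ⊥ ⊥ (by simp) (by simp) (by simp) (by simp)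
      have e1 : (1 : Fin 3) = i := hu 1 (by simpa using hb)
      have e2 : (2 : Fin 3) = i := hu 2 (by simpa using hb)
      exact absurd (e1.trans e2.symm) (by decide)
    have htop : ⊤ ∈ U := by
      obtain ⟨i, hi, hu⟩ := key ⊤ ⊥ ⊥ (by simp) (by simp) (by simp) (by simp)
      fin_cases i
      · simpa using hi
      · exact absurd (by simpa using hi) hbot
      · exact absurd (by simpa using hi) hbot
    have hnotboth : ∀ z : B, z ∈ U → zᶜ ∈ U → False := by
      intro z hz hzc
      obtain ⟨i, hi, hu⟩ := key z zᶜ ⊥ (by simp) (by simp) (by simp) (by simp)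
      have e0 : (0 : Fin 3) = i := hu 0 (by simpa using hz)
      have e1 : (1 : Fin 3) = i := hu 1 (by simpa using hzc)
      exact absurd (e0.trans e1.symm) (by decide)
    have hcomp : ∀ z : B, z ∈ U ∨ zᶜ ∈ U := by
      intro z
      obtain ⟨i, hi, hu⟩ := key z zᶜ ⊥ (by simp) (by simp) (by simp) (by simp)
      fin_cases i
      · exact Or.inl (by simpa using hi)
      · exact Or.inr (by simpa using hi)
      · exact absurd (by simpa using hi) hbot
    have hup : ∀ x ∈ U, ∀ y, x ≤ y → y ∈ U := by
      intro x hx y hxy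
      obtain ⟨i, hi, hu⟩ := key x (y ⊓ xᶜ) yᶜ
        (by rw [sup_inf_left, sup_compl_eq_top, inf_top_eq, sup_eq_right.mpr hxy,
              sup_compl_eq_top])
        (eq_bot_iff.mpr (calc x ⊓ (y ⊓ xᶜ) ≤ x ⊓ xᶜ := inf_le_inf_left x inf_le_right
          _ = ⊥ := inf_compl_eq_bot))
        (eq_bot_iff.mpr (calc x ⊓ yᶜ ≤ y ⊓ yᶜ := inf_le_inf_right _ hxy
          _ = ⊥ := inf_compl_eq_bot))
        (eq_bot_iff.mpr (calc (y ⊓ xᶜ) ⊓ yᶜ ≤ y ⊓ yᶜ := inf_le_inf_right _ inf_le_left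
          _ = ⊥ := inf_compl_eq_bot))
      have e0 : (0 : Fin 3) = i := hu 0 (by simpa using hx)
      rcases hcomp y with hy | hyc
      · exact hy
      · have e2 : (2 : Fin 3) = i := hu 2 (by simpa using hyc)
        exact absurd (e0.trans e2.symm) (by decide)
    have hmeet : ∀ x ∈ U, ∀ y ∈ U, x ⊓ y ∈ U := by
      intro x hx y hy
      obtain ⟨i, hi, hu⟩ := key (x ⊓ y) (x ⊓ yᶜ) xᶜ
        (by rw [← inf_sup_left, sup_compl_eq_top, inf_top_eq, sup_compl_eq_top])
        (eq_bot_iff.mpr (calc (x ⊓ y) ⊓ (x ⊓ yᶜ) ≤ y ⊓ yᶜ := inf_le_inf inf_le_right inf_le_right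
          _ = ⊥ := inf_compl_eq_bot))
        (eq_bot_iff.mpr (calc (x ⊓ y) ⊓ xᶜ ≤ x ⊓ xᶜ := inf_le_inf_right _ inf_le_left
          _ = ⊥ := inf_compl_eq_bot))
        (eq_bot_iff.mpr (calc (x ⊓ yᶜ) ⊓ xᶜ ≤ x ⊓ xᶜ := inf_le_inf_right _ inf_le_left
          _ = ⊥ := inf_compl_eq_bot))
      fin_cases i
      · simpa using hi
      · exact absurd (hnotboth y hy (hup _ (by simpa using hi) yᶜ inf_le_right)) id
      · exact absurd (hnotboth x hx (by simpa using hi)) id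
    exact ⟨htop, hbot, hmeet, hup, hcomp⟩
end

section
/- Let B be a Boolean algebra, n ≥ 3 a natural number, and U ⊆ B. Then U is an ultrafilter if and only if: for every family x₀, …, x_{n−1} ∈ B with x₀ ∨ ⋯ ∨ x_{n−1} = ⊤ and xᵢ ∧ xⱼ = ⊥ for all i < j, there is exactly one i with xᵢ ∈ U. -/
section

variable {B : Type*} [BooleanAlgebra B] {U : Set B}

def PicksUniqueBlock (U : Set B) (ι : Type*) [Fintype ι] [LinearOrder ι] : Prop :=
  ∀ x : ι → B, Finset.univ.sup x = ⊤ → (∀ i j : ι, i < j → x i ⊓ x j = ⊥) → ∃! i, x i ∈ U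

namespace IsBooleanUltrafilter

theorem inf_ne_bot (hU : IsBooleanUltrafilter U) {a b : B} (ha : a ∈ U) (hb : b ∈ U) :
    a ⊓ b ≠ ⊥ :=
  fun h => hU.2.1 (h ▸ hU.2.2.1 a ha b hb)

theorem sup_notMem (hU : IsBooleanUltrafilter U) {a b : B} (ha : a ∉ U) (hb : b ∉ U) :
    a ⊔ b ∉ U := fun hab => by
  have hcompl : (a ⊔ b)ᶜ ∈ U := compl_sup (a := a) ▸
    hU.2.2.1 _ ((hU.2.2.2.2 a).resolve_left ha) _ ((hU.2.2.2.2 b).resolve_left hb)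
  exact hU.inf_ne_bot hab hcompl inf_compl_eq_bot

theorem exists_mem_of_finset_sup_mem (hU : IsBooleanUltrafilter U) {ι : Type*} {s : Finset ι}
    {x : ι → B} (h : s.sup x ∈ U) : ∃ i ∈ s, x i ∈ U := by
  by_contra! hx
  exact Finset.sup_induction (p := (· ∉ U)) hU.2.1 (fun _ ha _ hb => hU.sup_notMem ha hb) hx h

theorem picksUniqueBlock (hU : IsBooleanUltrafilter U) (ι : Type*) [Fintype ι] [LinearOrder ι] :
    PicksUniqueBlock U ι := by
  intro x hsup hdisj
  obtain ⟨i, -, hi⟩ := hU.exists_mem_of_finset_sup_mem (hsup ▸ hU.1)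
  refine ⟨i, hi, fun j hj => ?_⟩
  by_contra hji
  rcases Ne.lt_or_gt hji with hlt | hlt
  · exact hU.inf_ne_bot hj hi (hdisj j i hlt)
  · exact hU.inf_ne_bot hi hj (hdisj i j hlt)

end IsBooleanUltrafilter

namespace PicksUniqueBlock

variable {ι κ : Type*} [Fintype ι] [LinearOrder ι] [Fintype κ] [LinearOrder κ]

theorem bot_notMem (h : PicksUniqueBlock U κ) {i j k : κ} (hij : i ≠ j) (hik : i ≠ k)
    (hjk : j ≠ k) : ⊥ ∉ U := by
  intro hbot
  set x : κ → B := Function.update ⊥ i ⊤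
  have hsup : Finset.univ.sup x = ⊤ :=
    eq_top_iff.2 (by simpa [x] using Finset.le_sup (f := x) (Finset.mem_univ i))
  have hdisj : ∀ a b : κ, a < b → x a ⊓ x b = ⊥ := by
    intro a b hab
    rcases eq_or_ne b i with rfl | hb
    · simp [x, hab.ne]
    · simp [x, hb]
  obtain ⟨l, -, huniq⟩ := h x hsup hdisj
  exact hjk <| (huniq j (by simp [x, hij.symm, hbot])).trans
    (huniq k (by simp [x, hik.symm, hbot])).symm

theorem comp_orderEmbedding (h : PicksUniqueBlock U κ) (hbot : ⊥ ∉ U) (e : ι ↪o κ) :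
    PicksUniqueBlock U ι := by
  intro x hsup hdisj
  set y := Function.extend e x ⊥
  have hy : ∀ i, y (e i) = x i := e.injective.extend_apply x ⊥
  have hy' : ∀ k, k ∉ Set.range e → y k = ⊥ := fun k hk => Function.extend_apply' _ _ _ hk
  have hysup : Finset.univ.sup y = ⊤ := eq_top_iff.2 <| hsup ▸
    Finset.sup_le fun i _ => hy i ▸ Finset.le_sup (Finset.mem_univ (e i))
  have hydisj : ∀ k l : κ, k < l → y k ⊓ y l = ⊥ := by
    intro k l hkl
    by_cases hk : k ∈ Set.range e
    · by_cases hl : l ∈ Set.range e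
      · obtain ⟨i, rfl⟩ := hk
        obtain ⟨j, rfl⟩ := hl
        rw [hy, hy]
        exact hdisj i j (e.lt_iff_lt.1 hkl)
      · rw [hy' l hl, inf_bot_eq]
    · rw [hy' k hk, bot_inf_eq]
  obtain ⟨k, hk, huniq⟩ := h y hysup hydisj
  obtain ⟨i, rfl⟩ : k ∈ Set.range e := by
    by_contra hk'
    exact hbot (hy' k hk' ▸ hk)
  refine ⟨i, (hy i ▸ hk : x i ∈ U), fun j hj => e.injective (huniq _ ?_)⟩
  exact ((hy j).symm ▸ hj : y (e j) ∈ U)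

section Triple

variable {a b c : B}

theorem existsUnique_mem_triple (h : PicksUniqueBlock U (Fin 3)) (hsup : a ⊔ b ⊔ c = ⊤)
    (hab : Disjoint a b) (hac : Disjoint a c) (hbc : Disjoint b c) : ∃! i, ![a, b, c] i ∈ U := by
  refine h _ (by simpa [Fin.univ_succ, sup_assoc] using hsup) ?_
  intro i j hij
  fin_cases i <;> fin_cases j <;> simp_all [disjoint_iff]

theorem mem_of_notMem_of_notMem (h : PicksUniqueBlock U (Fin 3)) (hsup : a ⊔ b ⊔ c = ⊤)
    (hab : Disjoint a b) (hac : Disjoint a c) (hbc : Disjoint b c) (hb : b ∉ U) (hc : c ∉ U) :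
    a ∈ U := by
  obtain ⟨i, hi, -⟩ := h.existsUnique_mem_triple hsup hab hac hbc
  fin_cases i
  · exact hi
  · exact absurd hi hb
  · exact absurd hi hc

theorem notMem_of_mem (h : PicksUniqueBlock U (Fin 3)) (hsup : a ⊔ b ⊔ c = ⊤)
    (hab : Disjoint a b) (hac : Disjoint a c) (hbc : Disjoint b c) (ha : a ∈ U) : c ∉ U :=
  fun hc => absurd ((h.existsUnique_mem_triple hsup hab hac hbc).unique (y₁ := 0) (y₂ := 2) ha hc)
    (by decide)

end Triple

theorem isBooleanUltrafilter (h : PicksUniqueBlock U (Fin 3)) (hbot : ⊥ ∉ U) :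
    IsBooleanUltrafilter U := by
  have mem_or_compl_mem (y : B) : y ∈ U ∨ yᶜ ∈ U := or_iff_not_imp_left.2 fun hy =>
    h.mem_of_notMem_of_notMem (b := ⊥) (c := y) (by simp) disjoint_bot_right disjoint_compl_left
      disjoint_bot_left hbot hy
  have compl_notMem {y : B} (hy : y ∈ U) : yᶜ ∉ U :=
    h.notMem_of_mem (b := ⊥) (by simp) disjoint_bot_right disjoint_compl_right disjoint_bot_left hy
  have upward {y : B} (hy : y ∈ U) {z : B} (hyz : y ≤ z) : z ∈ U :=
    (mem_or_compl_mem z).resolve_right <| h.notMem_of_mem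
      (by rw [sup_sdiff_cancel_right hyz, sup_compl_eq_top]) disjoint_sdiff_self_right
      (disjoint_compl_right.mono_left hyz) (disjoint_compl_right.mono_left sdiff_le) hy
  refine ⟨compl_bot (α := B) ▸ (mem_or_compl_mem ⊥).resolve_left hbot, hbot,
    fun y hy z hz => ?_, fun y hy z hyz => upward hy hyz, mem_or_compl_mem⟩
  have hsdiff : y \ z ∉ U := fun h' =>
    compl_notMem hz (upward h' (sdiff_eq (x := y) ▸ inf_le_right))
  exact h.mem_of_notMem_of_notMem (by rw [sup_inf_sdiff, sup_compl_eq_top]) disjoint_inf_sdiff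
    (disjoint_compl_right.mono_left inf_le_left) (disjoint_compl_right.mono_left sdiff_le)
    hsdiff (compl_notMem hy)

end PicksUniqueBlock

end

/-- For `n ≥ 3`, `U` is an ultrafilter iff for every family
`x₀, …, x_{n-1}` with `x₀ ⊔ ⋯ ⊔ x_{n-1} = ⊤` and `xᵢ ⊓ xⱼ = ⊥` for `i < j`,
exactly one `xᵢ` belongs to `U`. -/
theorem isBooleanUltrafilter_iff_finite_partition {B : Type*} [BooleanAlgebra B]
    (n : ℕ) (hn : 3 ≤ n) (U : Set B) :
    IsBooleanUltrafilter U ↔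
      ∀ x : Fin n → B, (Finset.univ.sup x = ⊤) →
        (∀ i j : Fin n, i < j → x i ⊓ x j = ⊥) →
        ∃! i : Fin n, x i ∈ U := by
  refine ⟨fun hU => hU.picksUniqueBlock (Fin n), fun h => ?_⟩
  let e := Fin.castLEOrderEmb hn
  have hbot : ⊥ ∉ U := PicksUniqueBlock.bot_notMem h (i := e 0) (j := e 1) (k := e 2)
    (e.injective.ne (by decide)) (e.injective.ne (by decide)) (e.injective.ne (by decide))
  exact (PicksUniqueBlock.comp_orderEmbedding h hbot e).isBooleanUltrafilter hbot
end

section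
/- Let X be a topological space, I a set, f : X → P(I) continuous, 𝔭 a completely prime filter of O(X), and D an open subset of P(I). Then ψ_f(𝔭) ∈ D if and only if f⁻¹(D) ∈ 𝔭. -/
open TopologicalSpace Topology

lemma mem_congr' {X : Type*} [TopologicalSpace X] (p : Set (Opens X)) {U V : Opens X}
    (h : U.1 = V.1) : U ∈ p ↔ V ∈ p := by
  have : U = V := Opens.ext h
  rw [this]

lemma finset_case {X : Type*} [TopologicalSpace X] {I : Type*} {f : X → Set I}
    (hf : Continuous[‹TopologicalSpace X›, pTop I] f) (p : Fp X) (F : Finset I)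
    (h : IsOpen (f ⁻¹' {A : Set I | ↑F ⊆ A})) :
    ((⟨f ⁻¹' {A : Set I | ↑F ⊆ A}, h⟩ : Opens X) ∈ p.1 ↔ ↑F ⊆ psiFp hf p) := by
  obtain ⟨htop, -, hmeet, hup, -⟩ := p.2
  classical
  induction F using Finset.induction with
  | empty =>
    have hm : (⟨f ⁻¹' {A : Set I | ↑(∅ : Finset I) ⊆ A}, h⟩ : Opens X) ∈ p.1 := by
      refine (mem_congr' p.1 (V := ⊤) ?_).mpr htop
      ext x; simp
    simp only [Finset.coe_empty, Set.empty_subset, iff_true] at hm ⊢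
    exact hm
  | @insert a F ha ih =>
    have hUa := @IsOpen.preimage X (Set I) _ (pTop I) f hf _ (isOpen_Ui a)
    have hUF := @IsOpen.preimage X (Set I) _ (pTop I) f hf _ (isOpen_UF F)
    have hcar : (⟨f ⁻¹' {A : Set I | ↑(insert a F) ⊆ A}, h⟩ : Opens X) =
        (⟨f ⁻¹' {A : Set I | a ∈ A}, hUa⟩ : Opens X) ⊓
          (⟨f ⁻¹' {A : Set I | ↑F ⊆ A}, hUF⟩ : Opens X) := by
      apply Opens.ext; ext x
      simp [Set.insert_subset_iff]
    rw [hcar]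
    constructor
    · intro hmem
      have h1 : (⟨f ⁻¹' {A : Set I | a ∈ A}, hUa⟩ : Opens X) ∈ p.1 :=
        hup _ hmem _ inf_le_left
      have h2 : (⟨f ⁻¹' {A : Set I | ↑F ⊆ A}, hUF⟩ : Opens X) ∈ p.1 :=
        hup _ hmem _ inf_le_right
      have h2' := (ih hUF).mp h2
      intro i hi
      simp only [Finset.coe_insert, Set.mem_insert_iff] at hi
      rcases hi with hi | hi
      · exact hi ▸ h1
      · exact h2' hi
    · intro hsub
      have h1 : (⟨f ⁻¹' {A : Set I | a ∈ A}, hUa⟩ : Opens X) ∈ p.1 :=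
        hsub (by simp)
      have h2 : (⟨f ⁻¹' {A : Set I | ↑F ⊆ A}, hUF⟩ : Opens X) ∈ p.1 :=
        (ih hUF).mpr fun i hi => hsub (by simp [hi])
      exact hmeet _ h1 _ h2

lemma psiFp_mem_aux {X : Type*} [TopologicalSpace X] {I : Type*} {f : X → Set I}
    (hf : Continuous[‹TopologicalSpace X›, pTop I] f) (p : Fp X) (D : Set (Set I))
    (hD : TopologicalSpace.GenerateOpen
      {S : Set (Set I) | ∃ F : Finset I, S = {A : Set I | ↑F ⊆ A}} D) :
    ∀ h : IsOpen (f ⁻¹' D),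
      (psiFp hf p ∈ D ↔ (⟨f ⁻¹' D, h⟩ : Opens X) ∈ p.1) := by
  obtain ⟨htop, -, hmeet, hup, hprime⟩ := p.2
  induction hD with
  | basic S hS =>
    intro h
    obtain ⟨F, rfl⟩ := hS
    exact (finset_case hf p F h).symm
  | univ =>
    intro h
    simp only [Set.mem_univ, true_iff]
    have : (⟨f ⁻¹' Set.univ, h⟩ : Opens X) = ⊤ := by apply Opens.ext; ext x; simp
    rw [this]; exact htop
  | inter U V hU hV ihU ihV =>
    intro h
    have hUo := @IsOpen.preimage X (Set I) _ (pTop I) f hf _ hU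
    have hVo := @IsOpen.preimage X (Set I) _ (pTop I) f hf _ hV
    have hcar : (⟨f ⁻¹' (U ∩ V), h⟩ : Opens X) =
        (⟨f ⁻¹' U, hUo⟩ : Opens X) ⊓ (⟨f ⁻¹' V, hVo⟩ : Opens X) := by
      apply Opens.ext; ext x; simp
    rw [hcar]
    constructor
    · rintro ⟨h1, h2⟩
      exact hmeet _ ((ihU hUo).mp h1) _ ((ihV hVo).mp h2)
    · intro hmem
      exact ⟨(ihU hUo).mpr (hup _ hmem _ inf_le_left),
        (ihV hVo).mpr (hup _ hmem _ inf_le_right)⟩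
  | sUnion S hS ih =>
    intro h
    constructor
    · rintro ⟨U, hUS, hmem⟩
      have hUo := @IsOpen.preimage X (Set I) _ (pTop I) f hf _ (hS U hUS)
      have h1 := (ih U hUS hUo).mp hmem
      refine hup _ h1 _ ?_
      intro x hx
      exact ⟨U, hUS, hx⟩
    · intro hmem
      set T : Set (Opens X) := {V : Opens X | ∃ U ∈ S, V.1 = f ⁻¹' U} with hT
      have hsup : (⟨f ⁻¹' ⋃₀ S, h⟩ : Opens X) = sSup T := by
        apply Opens.ext
        rw [Opens.coe_sSup]
        ext x
        constructor
        · rintro ⟨U, hUS, hx⟩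
          exact Set.mem_iUnion₂.mpr
            ⟨⟨f ⁻¹' U, @IsOpen.preimage X (Set I) _ (pTop I) f hf _ (hS U hUS)⟩,
              ⟨U, hUS, rfl⟩, hx⟩
        · intro hx
          obtain ⟨V, ⟨U, hUS, hVU⟩, hxV⟩ := Set.mem_iUnion₂.mp hx
          have : x ∈ f ⁻¹' U := hVU ▸ hxV
          exact ⟨U, hUS, this⟩
      rw [hsup] at hmem
      obtain ⟨V, ⟨U, hUS, hVU⟩, hVp⟩ := hprime T hmem
      have hUo := @IsOpen.preimage X (Set I) _ (pTop I) f hf _ (hS U hUS)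
      have : (⟨f ⁻¹' U, hUo⟩ : Opens X) ∈ p.1 :=
        (mem_congr' p.1 (U := V) (V := ⟨f ⁻¹' U, hUo⟩) hVU).mp hVp
      exact ⟨U, hUS, (ih U hUS hUo).mpr this⟩

/-- For a continuous `f : X → P(I)`, a completely prime filter `𝔭` of
`O(X)`, and an open `D ⊆ P(I)`: `ψ_f(𝔭) ∈ D ↔ f⁻¹(D) ∈ 𝔭`. -/
theorem psiFp_mem_open_iff {X : Type*} [TopologicalSpace X] {I : Type*} (f : X → Set I)
    (hf : Continuous[‹TopologicalSpace X›, pTop I] f) (p : Fp X)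
    (D : Set (Set I)) (hD : IsOpen[pTop I] D) :
    psiFp hf p ∈ D ↔
      (⟨f ⁻¹' D, @IsOpen.preimage X (Set I) _ (pTop I) f hf _ hD⟩ : Opens X) ∈ p.1 := by
  exact psiFp_mem_aux hf p D hD _
end

section
/- Let B, A, A₀ be categories with B essentially small, let h : B → A be a codense functor, and let i : A → A₀ be the inclusion of a reflective subcategory with reflector (left adjoint) F : A₀ → A. Assume the limits defining the codensity monads exist. Then for every object A of A₀ there is an isomorphism T^{i∘h}(A) ≅ i(F(A)), where T^{i∘h} denotes the underlying endofunctor of the codensity monad of i∘h; hence the codensity monad of i∘h is the idempotent monad given by the reflection, and its essential image is the subcategory A. -/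
open CategoryTheory

/-- `T` (a monad on `𝒜`), together with the projections `π`, is *the codensity monad* of
`G : ℬ ⥤ 𝒜`: for every object `a` of `𝒜`, `T.obj a` with the projections
`π a b f : T.obj a ⟶ G.obj b` (indexed by morphisms `f : a ⟶ G.obj b`) is a limit cone
over the comma-category diagram `(b, f) ↦ G.obj b`, and the functorial action, the unit
and the multiplication of `T` satisfy `T(g) ≫ π_f = π_{g ≫ f}`, `η_a ≫ π_f = f` and
`μ_a ≫ π_f = π_{π_f}`. -/
def IsCodensityMonad {ℬ 𝒜 : Type*} [Category ℬ] [Category 𝒜] (G : ℬ ⥤ 𝒜) (T : Monad 𝒜)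
    (π : ∀ (a : 𝒜) (b : ℬ), (a ⟶ G.obj b) → (T.obj a ⟶ G.obj b)) : Prop :=
  -- the projections form a cone over the comma-category diagram
  (∀ (a : 𝒜) (b b' : ℬ) (f : a ⟶ G.obj b) (φ : b ⟶ b'),
      π a b f ≫ G.map φ = π a b' (f ≫ G.map φ)) ∧
  -- the cone is a limit cone
  (∀ (a m : 𝒜) (c : ∀ b : ℬ, (a ⟶ G.obj b) → (m ⟶ G.obj b)),
      (∀ (b b' : ℬ) (f : a ⟶ G.obj b) (φ : b ⟶ b'),
        c b f ≫ G.map φ = c b' (f ≫ G.map φ)) →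
      ∃! l : m ⟶ T.obj a, ∀ (b : ℬ) (f : a ⟶ G.obj b), l ≫ π a b f = c b f) ∧
  -- functoriality, unit and multiplication are the canonical ones
  (∀ (a a' : 𝒜) (g : a ⟶ a') (b : ℬ) (f : a' ⟶ G.obj b),
      T.map g ≫ π a' b f = π a b (g ≫ f)) ∧
  (∀ (a : 𝒜) (b : ℬ) (f : a ⟶ G.obj b), T.η.app a ≫ π a b f = f) ∧
  (∀ (a : 𝒜) (b : ℬ) (f : a ⟶ G.obj b), T.μ.app a ≫ π a b f = π (T.obj a) b (π a b f))

universe w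

/-!
For codense `h`, every object `a'` of `𝒜` is the limit of `h` over `a' ↓ h`, with the
morphisms `a' ⟶ h b` themselves as projections. Transposing along `F ⊣ i` identifies
`F a ↓ h` with `a ↓ (h ⋙ i)`, and the right adjoint `i` preserves limits, so `i (F a)` is the
limit of `h ⋙ i` over `a ↓ (h ⋙ i)`: the reflection monad is itself a codensity monad of
`h ⋙ i`, hence isomorphic to `T`. Its essential image is that of `i`, because `F` is
essentially surjective when `i` is fully faithful.
-/

section

variable {ℬ 𝒜 𝒜₀ : Type*} [Category ℬ] [Category 𝒜] [Category 𝒜₀]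

def IsCodensityCone (G : ℬ ⥤ 𝒜) (a m : 𝒜) (c : ∀ b : ℬ, (a ⟶ G.obj b) → (m ⟶ G.obj b)) :
    Prop :=
  ∀ (b b' : ℬ) (f : a ⟶ G.obj b) (φ : b ⟶ b'), c b f ≫ G.map φ = c b' (f ≫ G.map φ)

structure IsCodensityLimit (G : ℬ ⥤ 𝒜) (a m : 𝒜)
    (c : ∀ b : ℬ, (a ⟶ G.obj b) → (m ⟶ G.obj b)) : Prop where
  isCone : IsCodensityCone G a m c
  existsUnique_lift : ∀ (m' : 𝒜) (c' : ∀ b : ℬ, (a ⟶ G.obj b) → (m' ⟶ G.obj b)),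
    IsCodensityCone G a m' c' → ∃! l : m' ⟶ m, ∀ b f, l ≫ c b f = c' b f

namespace IsCodensityCone

variable {G : ℬ ⥤ 𝒜} {a m : 𝒜} {c : ∀ b : ℬ, (a ⟶ G.obj b) → (m ⟶ G.obj b)}

lemma comp_left (hc : IsCodensityCone G a m c) {m' : 𝒜} (u : m' ⟶ m) :
    IsCodensityCone G a m' (fun b f => u ≫ c b f) := fun b b' f φ => by
  rw [Category.assoc, hc b b' f φ]

end IsCodensityCone

namespace IsCodensityLimit

variable {G : ℬ ⥤ 𝒜} {a m : 𝒜} {c : ∀ b : ℬ, (a ⟶ G.obj b) → (m ⟶ G.obj b)}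

lemma hom_ext (hc : IsCodensityLimit G a m c) {m' : 𝒜} {u v : m' ⟶ m}
    (huv : ∀ b f, u ≫ c b f = v ≫ c b f) : u = v :=
  (hc.existsUnique_lift m' _ (hc.isCone.comp_left u)).unique (fun _ _ => rfl)
    (fun b f => (huv b f).symm)

lemma ofIso (hc : IsCodensityLimit G a m c) {m' : 𝒜} (e : m' ≅ m) :
    IsCodensityLimit G a m' (fun b f => e.hom ≫ c b f) where
  isCone := hc.isCone.comp_left e.hom
  existsUnique_lift m'' c' hc' := by
    obtain ⟨l, hl, hl_unique⟩ := hc.existsUnique_lift m'' c' hc'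
    refine ⟨l ≫ e.inv, fun b f => by simpa using hl b f, fun l' hl' => ?_⟩
    rw [← hl_unique (l' ≫ e.hom) (fun b f => by simpa using hl' b f)]
    simp

lemma exists_iso {m' : 𝒜} {c' : ∀ b : ℬ, (a ⟶ G.obj b) → (m' ⟶ G.obj b)}
    (hc : IsCodensityLimit G a m c) (hc' : IsCodensityLimit G a m' c') :
    ∃ e : m ≅ m', ∀ b f, e.hom ≫ c' b f = c b f := by
  obtain ⟨u, hu, -⟩ := hc'.existsUnique_lift m c hc.isCone
  obtain ⟨v, hv, -⟩ := hc.existsUnique_lift m' c' hc'.isCone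
  exact ⟨⟨u, v, hc.hom_ext fun b f => by simp [hu, hv], hc'.hom_ext fun b f => by simp [hu, hv]⟩,
    hu⟩

variable {F : 𝒜₀ ⥤ 𝒜} {i : 𝒜 ⥤ 𝒜₀}

lemma transpose (adj : F ⊣ i) {a : 𝒜₀} {c : ∀ b : ℬ, (F.obj a ⟶ G.obj b) → (m ⟶ G.obj b)}
    (hc : IsCodensityLimit G (F.obj a) m c) :
    IsCodensityLimit (G ⋙ i) a (i.obj m)
      (fun b f => i.map (c b ((adj.homEquiv a (G.obj b)).symm f))) where
  isCone b b' f φ := by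
    dsimp only [Functor.comp_map]
    rw [← i.map_comp, hc.isCone, adj.homEquiv_naturality_right_symm]
  existsUnique_lift m' c' hc' := by
    let d b (g : F.obj a ⟶ G.obj b) : F.obj m' ⟶ G.obj b :=
      (adj.homEquiv m' (G.obj b)).symm (c' b (adj.homEquiv a (G.obj b) g))
    have hd : IsCodensityCone G (F.obj a) (F.obj m') d := fun b b' g φ => by
      simp only [d, ← adj.homEquiv_naturality_right_symm, adj.homEquiv_naturality_right]
      exact congrArg _ (hc' b b' _ φ)
    have transpose_comp (l : m' ⟶ i.obj m) b f :
        l ≫ i.map (c b ((adj.homEquiv a (G.obj b)).symm f)) = c' b f ↔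
          (adj.homEquiv m' m).symm l ≫ c b ((adj.homEquiv a (G.obj b)).symm f) =
            d b ((adj.homEquiv a (G.obj b)).symm f) := by
      rw [← adj.homEquiv_naturality_right_symm]
      simp only [d, Equiv.apply_symm_apply, Equiv.apply_eq_iff_eq]
    obtain ⟨l, hl, hl_unique⟩ := hc.existsUnique_lift _ d hd
    refine ⟨adj.homEquiv m' m l, fun b f => ?_, fun l' hl' => ?_⟩
    · rw [transpose_comp, Equiv.symm_apply_apply, hl]
    · rw [← hl_unique ((adj.homEquiv m' m).symm l') fun b g => ?_, Equiv.apply_symm_apply]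
      simpa using (transpose_comp l' b (adj.homEquiv a (G.obj b) g)).mp (hl' b _)

end IsCodensityLimit

namespace IsCodensityMonad

variable {G : ℬ ⥤ 𝒜} {T : Monad 𝒜} {π : ∀ (a : 𝒜) (b : ℬ), (a ⟶ G.obj b) → (T.obj a ⟶ G.obj b)}

lemma isCodensityLimit (hT : IsCodensityMonad G T π) (a : 𝒜) :
    IsCodensityLimit G a (T.obj a) (π a) :=
  ⟨hT.1 a, hT.2.1 a⟩

lemma isCodensityLimit_id (hT : IsCodensityMonad G T π) (a : 𝒜) [IsIso (T.η.app a)] :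
    IsCodensityLimit G a a (fun _ f => f) := by
  simpa only [asIso_hom, hT.2.2.2.1] using
    (hT.isCodensityLimit a).ofIso (asIso (T.η.app a) : a ≅ T.obj a)

theorem nonempty_iso {T' : Monad 𝒜}
    {π' : ∀ (a : 𝒜) (b : ℬ), (a ⟶ G.obj b) → (T'.obj a ⟶ G.obj b)}
    (hT : IsCodensityMonad G T π) (hT' : IsCodensityMonad G T' π') : Nonempty (T ≅ T') := by
  choose e he using fun a => (hT.isCodensityLimit a).exists_iso (hT'.isCodensityLimit a)
  let eT : T.toFunctor ≅ T'.toFunctor := NatIso.ofComponents e fun {a a'} g =>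
    (hT'.isCodensityLimit a').hom_ext fun b f => by
      simp only [Category.assoc, he, hT.2.2.1, hT'.2.2.1]
  refine ⟨MonadIso.mk eT (fun a => (hT'.isCodensityLimit a).hom_ext fun b f => ?_)
    (fun a => (hT'.isCodensityLimit a).hom_ext fun b f => ?_)⟩
  · simp only [eT, NatIso.ofComponents_hom_app, Category.assoc, he, hT.2.2.2.1, hT'.2.2.2.1]
  · simp only [eT, NatIso.ofComponents_hom_app, Category.assoc, he, hT.2.2.2.2, hT'.2.2.2.2,
      hT.2.2.1]

end IsCodensityMonad

namespace CategoryTheory.Adjunction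

lemma isCodensityMonad_toMonad {F : 𝒜₀ ⥤ 𝒜} {i : 𝒜 ⥤ 𝒜₀} (adj : F ⊣ i)
    (G : ℬ ⥤ 𝒜) (hG : ∀ a : 𝒜, IsCodensityLimit G a a (fun _ f => f)) :
    IsCodensityMonad (G ⋙ i) adj.toMonad
      (fun a b f => i.map ((adj.homEquiv a (G.obj b)).symm f)) := by
  have hlim a := (hG (F.obj a)).transpose adj
  refine ⟨fun a => (hlim a).isCone, fun a => (hlim a).existsUnique_lift,
    fun a a' g b f => ?_, fun a b f => ?_, fun a b f => ?_⟩
  · show (F ⋙ i).map g ≫ i.map _ = _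
    rw [Functor.comp_map, ← i.map_comp, ← adj.homEquiv_naturality_left_symm]
  · exact (adj.homEquiv_unit _ _ _).symm.trans ((adj.homEquiv a (G.obj b)).apply_symm_apply f)
  · show i.map (adj.counit.app (F.obj a)) ≫ i.map ((adj.homEquiv a (G.obj b)).symm f) =
      i.map ((adj.homEquiv (i.obj (F.obj a)) (G.obj b)).symm
        (i.map ((adj.homEquiv a (G.obj b)).symm f)))
    rw [← i.map_comp, adj.homEquiv_counit (i.obj (F.obj a)) (G.obj b)]
    exact congrArg i.map (adj.counit_naturality _).symm

lemma essSurj_leftAdjoint {F : 𝒜₀ ⥤ 𝒜} {i : 𝒜 ⥤ 𝒜₀} [i.Full] [i.Faithful]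
    (adj : F ⊣ i) : F.EssSurj where
  mem_essImage a := ⟨i.obj a, ⟨asIso (adj.counit.app a)⟩⟩

end CategoryTheory.Adjunction

end

theorem codensityMonad_of_codense_into_reflective_general
    {ℬ : Type*} {𝒜 : Type*} {𝒜₀ : Type*} [Category ℬ] [Category 𝒜] [Category 𝒜₀]
    (h : ℬ ⥤ 𝒜) (i : 𝒜 ⥤ 𝒜₀) [i.Full] [i.Faithful] (F : 𝒜₀ ⥤ 𝒜) (adj : F ⊣ i)
    (S : Monad 𝒜) (πS : ∀ (a : 𝒜) (b : ℬ), (a ⟶ h.obj b) → (S.obj a ⟶ h.obj b))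
    (hS : IsCodensityMonad h S πS)
    (hcodense : ∀ a : 𝒜, IsIso (S.η.app a))
    (T : Monad 𝒜₀) (πT : ∀ (a : 𝒜₀) (b : ℬ), (a ⟶ (h ⋙ i).obj b) → (T.obj a ⟶ (h ⋙ i).obj b))
    (hT : IsCodensityMonad (h ⋙ i) T πT) :
    (∀ a : 𝒜₀, Nonempty (T.obj a ≅ i.obj (F.obj a))) ∧
    Nonempty (T ≅ adj.toMonad) ∧
    (∀ x : 𝒜₀, T.toFunctor.essImage x ↔ i.essImage x) := by
  obtain ⟨e⟩ := hT.nonempty_iso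
    (adj.isCodensityMonad_toMonad h fun a => hS.isCodensityLimit_id a)
  have eT : T.toFunctor ≅ F ⋙ i := (monadToFunctor 𝒜₀).mapIso e
  have := adj.essSurj_leftAdjoint
  refine ⟨fun a => ⟨eT.app a⟩, ⟨e⟩, fun x => ?_⟩
  rw [Functor.essImage_eq_of_natIso eT, Functor.essImage_comp_of_essSurj]

/-- Let `h : ℬ ⥤ 𝒜` be a codense functor (`ℬ` essentially small), and let
`i : 𝒜 ⥤ 𝒜₀` be the inclusion of a reflective subcategory, with reflector `F ⊣ i`.  Assume
the codensity monads of `h` and of `i ⋙ h` exist (given here as `S` and `T` with their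
limit projections; codensity of `h` means the unit of its codensity monad is an
isomorphism).  Then `T(a) ≅ i(F(a))` for every object `a` of `𝒜₀`; hence the codensity
monad `T` of `i ∘ h` is isomorphic (as a monad) to the idempotent monad given by the
reflection, and its essential image is the subcategory `𝒜`. -/
theorem codensityMonad_of_codense_into_reflective
    {ℬ : Type*} {𝒜 : Type*} {𝒜₀ : Type*} [Category ℬ] [Category 𝒜] [Category 𝒜₀]
    [EssentiallySmall.{w} ℬ]
    (h : ℬ ⥤ 𝒜) (i : 𝒜 ⥤ 𝒜₀) [i.Full] [i.Faithful] (F : 𝒜₀ ⥤ 𝒜) (adj : F ⊣ i)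
    (S : Monad 𝒜) (πS : ∀ (a : 𝒜) (b : ℬ), (a ⟶ h.obj b) → (S.obj a ⟶ h.obj b))
    (hS : IsCodensityMonad h S πS)
    (hcodense : ∀ a : 𝒜, IsIso (S.η.app a))
    (T : Monad 𝒜₀) (πT : ∀ (a : 𝒜₀) (b : ℬ), (a ⟶ (h ⋙ i).obj b) → (T.obj a ⟶ (h ⋙ i).obj b))
    (hT : IsCodensityMonad (h ⋙ i) T πT) :
    (∀ a : 𝒜₀, Nonempty (T.obj a ≅ i.obj (F.obj a))) ∧
    Nonempty (T ≅ adj.toMonad) ∧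
    (∀ x : 𝒜₀, T.toFunctor.essImage x ↔ i.essImage x) :=
  codensityMonad_of_codense_into_reflective_general h i F adj S πS hS hcodense T πT hT
end
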